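/- Let C be a planar convex body that is k_C-rotationally symmetric about a point p in its interior, where k_C is a composite integer whose smallest divisor χ greater than 1 satisfies χ ≥ 3. Then d_M(P_a) = d_M(P_b) for all divisors a, b > 1 of k_C (a chain of equalities among the values d_M over the divisors of k_C greater than 1) if and only if χ ≥ 7. -/

import Mathlib

open Metric Set

/-- Rotation of angle `α` about the point `p` in the plane `ℂ`. -/
noncomputable def rot (p : ℂ) (α : ℝ) : ℂ → ℂ :=
  fun z => p + Complex.exp (α * Complex.I) * (z - p)

/-- A planar convex body: a compact convex subset of the plane with nonempty interior. -/
def IsConvexBody (C : Set ℂ) : Prop :=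
  IsCompact C ∧ Convex ℝ C ∧ (interior C).Nonempty

/-- `C` is `k`-rotationally symmetric about `p`: the rotation of angle `2π/k`
about `p` maps `C` onto itself. -/
def IsRotSym (C : Set ℂ) (p : ℂ) (k : ℕ) : Prop :=
  rot p (2 * Real.pi / k) '' C = C

/-- The closed convex sector at `p` spanned by `x - p` and `ρ_k(x) - p`. -/
noncomputable def sector (p x : ℂ) (k : ℕ) : Set ℂ :=
  {z | ∃ a b : ℝ, 0 ≤ a ∧ 0 ≤ b ∧
    z = p + (a : ℂ) * (x - p) + (b : ℂ) * (rot p (2 * Real.pi / k) x - p)}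

/-- The maximum relative diameter of the standard `k`-partition of `C`
(with center `p` and endpoint `x`): the diameter of one piece `C ∩ S_k`. -/
noncomputable def dM (C : Set ℂ) (p x : ℂ) (k : ℕ) : ℝ :=
  Metric.diam (C ∩ sector p x k)

/-- The circumradius of `C` with respect to `p`: `sup_{y ∈ C} dist p y`. -/
noncomputable def circumrad (C : Set ℂ) (p : ℂ) : ℝ :=
  ⨆ y ∈ C, dist p y

/-!
For a divisor `c ≥ 6` of `k_C` the sector of `P_c` has angle at most `π / 3`, so two of its points
are never farther apart than the farther of them is from `p`, and `d_M(P_c) ≤ R`; rotating a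
farthest point of `C` into the sector by a multiple of `2π / c` gives `d_M(P_c) = R`. So if
`χ ≥ 7` all the values equal `R`. If `χ ∈ {3, 5}`, then `k_C ≥ χ² ≥ 9` and `d_M(P_{k_C}) = R`,
while the piece of `P_χ` contains the chord from `x` to `ρ_χ(x)`, of length `2 sin (π / χ) r`.
By convexity `C` contains the regular `k_C`-gon spanned by the rotates of a farthest point,
whose inradius is `R cos (π / k_C)`, so `r ≥ R cos (π / k_C)`; and
`2 sin (π / 5) cos (π / 9) > 1` gives `d_M(P_χ) > R`.
-/

open Complex (exp I)
open scoped Real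

lemma rot_sub (p : ℂ) (α : ℝ) (z : ℂ) : rot p α z - p = exp (α * I) * (z - p) := by
  simp [rot]

lemma rot_zero (p : ℂ) : rot p 0 = id := by
  funext z; simp [rot]

lemma rot_add (p : ℂ) (α β : ℝ) : rot p (α + β) = rot p α ∘ rot p β := by
  funext z
  simp only [rot, Function.comp_apply, Complex.ofReal_add, add_mul, Complex.exp_add]
  ring

lemma dist_rot (p : ℂ) (α : ℝ) (z : ℂ) : dist p (rot p α z) = dist p z := by
  rw [dist_comm, Complex.dist_eq, rot_sub, norm_mul, Complex.norm_exp_ofReal_mul_I, one_mul,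
    ← Complex.dist_eq, dist_comm]

lemma dist_rot_self (p : ℂ) (α : ℝ) (z : ℂ) :
    dist z (rot p α z) = ‖2 * Real.sin (α / 2)‖ * dist p z := by
  have : rot p α z - z = (exp (I * α) - 1) * (z - p) := by simp only [rot]; ring_nf
  rw [dist_comm, Complex.dist_eq, this, norm_mul, Complex.norm_exp_I_mul_ofReal_sub_one,
    ← Complex.dist_eq, dist_comm]

def rotSymAngles (C : Set ℂ) (p : ℂ) : AddSubgroup ℝ where
  carrier := {α | rot p α '' C = C}
  zero_mem' := by simp [rot_zero]
  add_mem' {α β} hα hβ := by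
    simp only [mem_ofPred_eq] at *
    rw [rot_add, image_comp, hβ, hα]
  neg_mem' {α} hα := by
    calc rot p (-α) '' C = rot p (-α) '' (rot p α '' C) := by rw [hα]
    _ = C := by rw [← image_comp, ← rot_add, neg_add_cancel, rot_zero, image_id]

lemma isRotSym_iff_mem_rotSymAngles {C : Set ℂ} {p : ℂ} {k : ℕ} :
    IsRotSym C p k ↔ 2 * π / k ∈ rotSymAngles C p :=
  Iff.rfl

namespace IsRotSym

variable {C : Set ℂ} {p : ℂ} {k : ℕ}

lemma of_dvd {a : ℕ} (h : IsRotSym C p k) (hak : a ∣ k) (hk : k ≠ 0) : IsRotSym C p a := by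
  obtain ⟨m, rfl⟩ := hak
  have hm : (m : ℝ) ≠ 0 := by exact_mod_cast right_ne_zero_of_mul hk
  have : 2 * π / a = m • (2 * π / ↑(a * m)) := by
    rw [nsmul_eq_mul]; push_cast; field_simp
  rw [isRotSym_iff_mem_rotSymAngles, this]
  exact nsmul_mem h m

lemma rot_zsmul_mem (h : IsRotSym C p k) (j : ℤ) {y : ℂ} (hy : y ∈ C) :
    rot p (j * (2 * π / k)) y ∈ C := by
  have : j * (2 * π / k) ∈ rotSymAngles C p := by
    simpa only [zsmul_eq_mul] using zsmul_mem (isRotSym_iff_mem_rotSymAngles.1 h) j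
  exact (show rot p _ '' C = C from this) ▸ mem_image_of_mem _ hy

end IsRotSym

/-- The triangle `0, 1, exp (β * I)` contains the circular sector of radius `cos (β / 2)`
between its two sides. -/
lemma exists_exp_mul_I_eq_add_mul_exp {β φ : ℝ} (hβ₀ : 0 < β) (hβ : β < π) (hφ₀ : 0 ≤ φ)
    (hφβ : φ ≤ β) :
    ∃ a b : ℝ, 0 ≤ a ∧ 0 ≤ b ∧ (a + b) * Real.cos (β / 2) ≤ 1 ∧
      exp (φ * I) = a + b * exp (β * I) := by
  have hsin : 0 < Real.sin β := Real.sin_pos_of_pos_of_lt_pi hβ₀ hβ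
  refine ⟨Real.sin (β - φ) / Real.sin β, Real.sin φ / Real.sin β,
    div_nonneg (Real.sin_nonneg_of_nonneg_of_le_pi (by linarith) (by linarith)) hsin.le,
    div_nonneg (Real.sin_nonneg_of_nonneg_of_le_pi hφ₀ (by linarith)) hsin.le, ?_, ?_⟩
  · have hsum : Real.sin (β - φ) + Real.sin φ = 2 * Real.sin (β / 2) * Real.cos (β / 2 - φ) := by
      rw [Real.sin_add_sin]; ring_nf
    have hdouble : Real.sin β = 2 * Real.sin (β / 2) * Real.cos (β / 2) := by
      rw [← Real.sin_two_mul]; ring_nf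
    rw [← add_div, hsum, div_mul_eq_mul_div, div_le_one hsin, hdouble]
    nlinarith [Real.cos_le_one (β / 2 - φ)]
  · rw [Complex.exp_mul_I, Complex.exp_mul_I, Complex.ext_iff]
    simp only [← Complex.ofReal_cos, ← Complex.ofReal_sin, Complex.add_re, Complex.add_im,
      Complex.mul_re, Complex.mul_im, Complex.ofReal_re, Complex.ofReal_im, Complex.I_re,
      Complex.I_im, Real.sin_sub]
    constructor <;> field_simp <;> ring

lemma exists_eq_exp_mul_add_mul {β : ℝ} (hβ₀ : 0 < β) (hβ : β < π) {u : ℂ} (hu : u ≠ 0)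
    (v : ℂ) :
    ∃ j : ℤ, ∃ a b : ℝ, 0 ≤ a ∧ 0 ≤ b ∧ (a + b) * Real.cos (β / 2) * ‖u‖ ≤ ‖v‖ ∧
      v = exp ((j * β : ℝ) * I) * (a * u + b * (exp (β * I) * u)) := by
  set w := v / u
  obtain ⟨j, ⟨hφ₀, hφβ⟩, -⟩ := existsUnique_sub_zsmul_mem_Ico hβ₀ w.arg 0
  rw [zsmul_eq_mul] at hφ₀ hφβ
  rw [zero_add] at hφβ
  obtain ⟨a, b, ha, hb, hab, hφ⟩ :=
    exists_exp_mul_I_eq_add_mul_exp hβ₀ hβ hφ₀ hφβ.le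
  refine ⟨j, ‖w‖ * a, ‖w‖ * b, by positivity, by positivity, ?_, ?_⟩
  · calc (‖w‖ * a + ‖w‖ * b) * Real.cos (β / 2) * ‖u‖
        = ((a + b) * Real.cos (β / 2)) * (‖w‖ * ‖u‖) := by ring
      _ ≤ 1 * (‖w‖ * ‖u‖) := by gcongr
      _ = ‖v‖ := by rw [one_mul, ← norm_mul, div_mul_cancel₀ v hu]
  · have hw : exp (w.arg * I) = exp ((j * β : ℝ) * I) * exp ((w.arg - j * β : ℝ) * I) := by
      rw [← Complex.exp_add]; push_cast; ring_nf
    calc v = ‖w‖ * exp (w.arg * I) * u := by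
          rw [Complex.norm_mul_exp_arg_mul_I, div_mul_cancel₀ v hu]
      _ = _ := by rw [hw, hφ]; push_cast; ring

lemma mem_sector_iff {p x z : ℂ} {k : ℕ} :
    z ∈ sector p x k ↔ ∃ a b : ℝ, 0 ≤ a ∧ 0 ≤ b ∧
      z - p = (a + b * exp ((2 * π / k : ℝ) * I)) * (x - p) := by
  simp only [sector, mem_ofPred_eq, rot_sub]
  refine exists₂_congr fun a b => and_congr_right' <| and_congr_right' ?_
  constructor <;> intro h <;> linear_combination h

lemma two_pi_div_lt_pi {k : ℕ} (hk : 3 ≤ k) : 2 * π / k < π := by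
  rw [div_lt_iff₀ (by positivity)]
  nlinarith [Real.pi_pos, (show (3 : ℝ) ≤ k by exact_mod_cast hk)]

lemma cos_pi_div_pos {k : ℕ} (hk : 3 ≤ k) : 0 < Real.cos (π / k) := by
  have hk₀ : 0 < π / k := div_pos Real.pi_pos (by exact_mod_cast (by omega : 0 < k))
  have := two_pi_div_lt_pi hk
  rw [mul_div_assoc] at this
  exact Real.cos_pos_of_mem_Ioo ⟨by linarith, by linarith⟩

lemma Convex.add_smul_sub_add_smul_sub_mem {E : Type*} [AddCommGroup E] [Module ℝ E]
    {s : Set E} (hs : Convex ℝ s) {p y z : E} (hp : p ∈ s) (hy : y ∈ s) (hz : z ∈ s)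
    {a b : ℝ} (ha : 0 ≤ a) (hb : 0 ≤ b) (hab : a + b ≤ 1) :
    p + a • (y - p) + b • (z - p) ∈ s := by
  rcases (add_nonneg ha hb).eq_or_lt with h0 | hpos
  · obtain ⟨rfl, rfl⟩ : a = 0 ∧ b = 0 := ⟨by linarith, by linarith⟩
    simpa using hp
  have hm : y + (b / (a + b)) • (z - y) ∈ s :=
    hs.add_smul_sub_mem hy hz ⟨by positivity, div_le_one_of_le₀ (by linarith) hpos.le⟩
  convert hs.add_smul_sub_mem hp hm ⟨hpos.le, hab⟩ using 1
  rw [show (a + b) • (y + (b / (a + b)) • (z - y) - p)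
      = (a + b) • (y - p) + ((a + b) * (b / (a + b))) • (z - y) by module,
    mul_div_cancel₀ _ hpos.ne']
  module

namespace IsRotSym

variable {C : Set ℂ} {p : ℂ} {k : ℕ}

lemma exists_mem_sector_dist_eq (h : IsRotSym C p k) (hk : 3 ≤ k) {x y : ℂ} (hxp : x ≠ p)
    (hy : y ∈ C) : ∃ y' ∈ C ∩ sector p x k, dist p y' = dist p y := by
  obtain ⟨j, a, b, ha, hb, -, hv⟩ :=
    exists_eq_exp_mul_add_mul (by positivity) (two_pi_div_lt_pi hk) (sub_ne_zero.2 hxp) (y - p)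
  refine ⟨_, ⟨h.rot_zsmul_mem (-j) hy, mem_sector_iff.2 ⟨a, b, ha, hb, ?_⟩⟩, dist_rot ..⟩
  have hcancel : (((-j : ℤ) * (2 * π / k) : ℝ) : ℂ) * I + ((j * (2 * π / k) : ℝ) : ℂ) * I = 0 := by
    push_cast; ring
  rw [rot_sub, hv, ← mul_assoc, ← Complex.exp_add, hcancel, Complex.exp_zero]
  ring

lemma closedBall_dist_mul_cos_subset (h : IsRotSym C p k) (hC : Convex ℝ C) (hk : 3 ≤ k)
    (hp : p ∈ C) {z : ℂ} (hz : z ∈ C) : closedBall p (dist p z * Real.cos (π / k)) ⊆ C := by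
  intro q hq
  rcases eq_or_ne z p with hzp | hzp
  · rw [hzp, dist_self, zero_mul, closedBall_zero] at hq
    rwa [mem_singleton_iff.1 hq]
  obtain ⟨j, a, b, ha, hb, hab, hv⟩ :=
    exists_eq_exp_mul_add_mul (by positivity) (two_pi_div_lt_pi hk) (sub_ne_zero.2 hzp) (q - p)
  have hab1 : a + b ≤ 1 := by
    rw [show 2 * π / k / 2 = π / k by ring] at hab
    rw [mem_closedBall, Complex.dist_eq, dist_comm, Complex.dist_eq] at hq
    have hzp' : 0 < ‖z - p‖ := norm_pos_iff.2 (sub_ne_zero.2 hzp)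
    nlinarith [mul_pos (cos_pi_div_pos hk) hzp']
  have hq' : q = p + a • (rot p (j * (2 * π / k)) z - p)
      + b • (rot p ((j + 1 : ℤ) * (2 * π / k)) z - p) := by
    have he : exp (((j + 1 : ℤ) * (2 * π / k) : ℝ) * I)
        = exp ((j * (2 * π / k) : ℝ) * I) * exp ((2 * π / k : ℝ) * I) := by
      rw [← Complex.exp_add]; push_cast; ring_nf
    simp only [rot_sub, Complex.real_smul, he]
    linear_combination hv
  rw [hq']
  exact hC.add_smul_sub_add_smul_sub_mem hp (h.rot_zsmul_mem _ hz) (h.rot_zsmul_mem _ hz) ha hb hab1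

end IsRotSym

lemma norm_sub_le_max_of_norm_mul_norm_le_two_inner {E : Type*} [NormedAddCommGroup E]
    [InnerProductSpace ℝ E] {u v : E} (h : ‖u‖ * ‖v‖ ≤ 2 * inner ℝ u v) :
    ‖u - v‖ ≤ max ‖u‖ ‖v‖ := by
  rw [← sq_le_sq₀ (norm_nonneg _) (le_max_of_le_left (norm_nonneg _)), norm_sub_sq_real]
  rcases le_total ‖u‖ ‖v‖ with huv | huv
  · rw [max_eq_right huv]; nlinarith [norm_nonneg u]
  · rw [max_eq_left huv]; nlinarith [norm_nonneg v]

lemma norm_mul_norm_le_two_inner_of_half_le_cos {β : ℝ} (hβ : 1 / 2 ≤ Real.cos β)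
    {a₁ b₁ a₂ b₂ : ℝ} (ha₁ : 0 ≤ a₁) (hb₁ : 0 ≤ b₁) (ha₂ : 0 ≤ a₂) (hb₂ : 0 ≤ b₂) :
    ‖(a₁ + b₁ * exp (β * I) : ℂ)‖ * ‖(a₂ + b₂ * exp (β * I) : ℂ)‖ ≤
      2 * inner ℝ (a₁ + b₁ * exp (β * I) : ℂ) (a₂ + b₂ * exp (β * I)) := by
  have hnorm {a b : ℝ} (ha : 0 ≤ a) (hb : 0 ≤ b) : ‖(a + b * exp (β * I) : ℂ)‖ ≤ a + b := by
    refine (norm_add_le _ _).trans_eq ?_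
    rw [norm_mul, Complex.norm_exp_ofReal_mul_I, Complex.norm_real, Complex.norm_real,
      Real.norm_of_nonneg ha, Real.norm_of_nonneg hb, mul_one]
  have hinner : inner ℝ (a₁ + b₁ * exp (β * I) : ℂ) (a₂ + b₂ * exp (β * I))
      = a₁ * a₂ + b₁ * b₂ + (a₁ * b₂ + a₂ * b₁) * Real.cos β := by
    rw [Complex.inner, Complex.exp_mul_I]
    simp only [← Complex.ofReal_cos, ← Complex.ofReal_sin, map_add, map_mul, Complex.conj_ofReal,
      Complex.conj_I, Complex.mul_re, Complex.add_re, Complex.add_im, Complex.mul_im,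
      Complex.ofReal_re, Complex.ofReal_im, Complex.I_re, Complex.I_im, Complex.neg_re,
      Complex.neg_im]
    linear_combination (b₁ * b₂) * Real.sin_sq_add_cos_sq β
  rw [hinner]
  calc _ ≤ (a₁ + b₁) * (a₂ + b₂) :=
        mul_le_mul (hnorm ha₁ hb₁) (hnorm ha₂ hb₂) (norm_nonneg _) (by positivity)
    _ ≤ _ := by nlinarith [mul_nonneg ha₁ ha₂, mul_nonneg hb₁ hb₂, mul_nonneg ha₁ hb₂,
        mul_nonneg ha₂ hb₁]

lemma half_le_cos_two_pi_div {k : ℕ} (hk : 6 ≤ k) : 1 / 2 ≤ Real.cos (2 * π / k) := by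
  rw [← Real.cos_pi_div_three]
  have hk' : (6 : ℝ) ≤ k := by exact_mod_cast hk
  apply Real.cos_le_cos_of_nonneg_of_le_pi (by positivity) (by linarith [Real.pi_pos])
  rw [div_le_div_iff₀ (by linarith) (by norm_num)]
  nlinarith [Real.pi_pos]

lemma dist_le_max_of_mem_sector {p x u v : ℂ} {k : ℕ} (hk : 6 ≤ k) (hu : u ∈ sector p x k)
    (hv : v ∈ sector p x k) : dist u v ≤ max (dist p u) (dist p v) := by
  obtain ⟨a₁, b₁, ha₁, hb₁, hu⟩ := mem_sector_iff.1 hu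
  obtain ⟨a₂, b₂, ha₂, hb₂, hv⟩ := mem_sector_iff.1 hv
  have huv : u - v = (u - p) - (v - p) := by ring
  rw [dist_comm p u, dist_comm p v, Complex.dist_eq, Complex.dist_eq, Complex.dist_eq, huv, hu,
    hv, ← sub_mul, norm_mul, norm_mul, norm_mul, ← max_mul_of_nonneg _ _ (norm_nonneg _)]
  gcongr
  exact norm_sub_le_max_of_norm_mul_norm_le_two_inner
    (norm_mul_norm_le_two_inner_of_half_le_cos (half_le_cos_two_pi_div hk) ha₁ hb₁ ha₂ hb₂)

lemma dM_le_of_forall_dist_le {C : Set ℂ} {p x : ℂ} {k : ℕ} (hk : 6 ≤ k) {R : ℝ} (hR : 0 ≤ R)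
    (h : ∀ y ∈ C, dist p y ≤ R) : dM C p x k ≤ R :=
  diam_le_of_forall_dist_le hR fun _ hu _ hv =>
    (dist_le_max_of_mem_sector hk hu.2 hv.2).trans (max_le (h _ hu.1) (h _ hv.1))

namespace IsRotSym

variable {C : Set ℂ} {p : ℂ} {k : ℕ}

lemma dist_le_dM (h : IsRotSym C p k) (hC : Bornology.IsBounded C) (hk : 3 ≤ k) {x y : ℂ}
    (hxp : x ≠ p) (hp : p ∈ C) (hy : y ∈ C) : dist p y ≤ dM C p x k := by
  obtain ⟨y', hy', hdist⟩ := h.exists_mem_sector_dist_eq hk hxp hy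
  have hp' : p ∈ C ∩ sector p x k := ⟨hp, mem_sector_iff.2 ⟨0, 0, le_rfl, le_rfl, by simp⟩⟩
  exact hdist ▸ dist_le_diam_of_mem (hC.subset inter_subset_left) hp' hy'

lemma dM_eq_of_isMaxOn (h : IsRotSym C p k) (hC : Bornology.IsBounded C) (hk : 6 ≤ k)
    {x z : ℂ} (hxp : x ≠ p) (hp : p ∈ C) (hz : z ∈ C) (hmax : IsMaxOn (dist p) C z) :
    dM C p x k = dist p z :=
  le_antisymm (dM_le_of_forall_dist_le hk dist_nonneg hmax)
    (h.dist_le_dM hC (by omega) hxp hp hz)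

lemma two_mul_sin_mul_dist_le_dM (h : IsRotSym C p k) (hC : Bornology.IsBounded C) {x : ℂ}
    (hx : x ∈ C) : 2 * Real.sin (π / k) * dist p x ≤ dM C p x k := by
  have hx' : x ∈ C ∩ sector p x k := ⟨hx, mem_sector_iff.2 ⟨1, 0, zero_le_one, le_rfl, by simp⟩⟩
  have hρx : rot p (2 * π / k) x ∈ C ∩ sector p x k :=
    ⟨h ▸ mem_image_of_mem _ hx, mem_sector_iff.2 ⟨0, 1, le_rfl, zero_le_one, by simp [rot_sub]⟩⟩
  calc 2 * Real.sin (π / k) * dist p x ≤ ‖2 * Real.sin (2 * π / k / 2)‖ * dist p x := by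
        rw [show 2 * π / k / 2 = π / k by ring]
        gcongr
        exact Real.le_norm_self _
    _ = dist x (rot p (2 * π / k) x) := (dist_rot_self ..).symm
    _ ≤ dM C p x k := dist_le_diam_of_mem (hC.subset inter_subset_left) hx' hρx

lemma dist_mul_cos_le_dist_of_mem_frontier (h : IsRotSym C p k) (hC : Convex ℝ C) (hk : 3 ≤ k)
    (hp : p ∈ C) {z f : ℂ} (hz : z ∈ C) (hf : f ∈ frontier C) :
    dist p z * Real.cos (π / k) ≤ dist p f := by
  by_contra! hlt
  have hball : ball p (dist p z * Real.cos (π / k)) ⊆ interior C := interior_maximal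
    (ball_subset_closedBall.trans (h.closedBall_dist_mul_cos_subset hC hk hp hz)) isOpen_ball
  exact hf.2 (hball (by rwa [mem_ball, dist_comm]))

end IsRotSym

lemma one_lt_two_mul_sin_pi_div_mul_cos_pi_div {m n : ℕ} (hm : 2 ≤ m) (hm5 : m ≤ 5)
    (hn : 9 ≤ n) : 1 < 2 * Real.sin (π / m) * Real.cos (π / n) := by
  have hm' : (2 : ℝ) ≤ m := by exact_mod_cast hm
  have hn' : (9 : ℝ) ≤ n := by exact_mod_cast hn
  have hsin : Real.sin (π / 5) ≤ Real.sin (π / m) := by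
    apply Real.sin_le_sin_of_le_of_le_pi_div_two (by linarith [Real.pi_pos])
    · exact div_le_div_of_nonneg_left Real.pi_pos.le (by norm_num) hm'
    · exact div_le_div_of_nonneg_left Real.pi_pos.le (by linarith) (by exact_mod_cast hm5)
  have hcos : Real.cos (π / 9) ≤ Real.cos (π / n) := by
    apply Real.cos_le_cos_of_nonneg_of_le_pi (by positivity) (by linarith [Real.pi_pos])
    exact div_le_div_of_nonneg_left Real.pi_pos.le (by norm_num) hn'
  have hπ₁ := Real.pi_gt_d2
  have hπ₂ := Real.pi_lt_d2
  have hsin5 : 0.58 < Real.sin (π / 5) := by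
    have hcube : (π / 5) ^ 3 < 0.63 ^ 3 :=
      pow_lt_pow_left₀ (by linarith) (by positivity) (by norm_num)
    linarith [Real.sin_gt_sub_cube (x := π / 5) (by positivity)]
  have hcos9 : 0.93 < Real.cos (π / 9) := by
    nlinarith [Real.one_sub_sq_div_two_le_cos (x := π / 9)]
  nlinarith [mul_lt_mul'' hsin5 hcos9 (by norm_num) (by norm_num)]

lemma IsRotSym.dM_lt_dM_of_dvd {C : Set ℂ} {p x z : ℂ} {k m : ℕ} (h : IsRotSym C p k)
    (hC : IsCompact C) (hconv : Convex ℝ C) (hp : p ∈ interior C) (hx : x ∈ frontier C)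
    (hz : z ∈ C) (hmax : IsMaxOn (dist p) C z) (hmk : m ∣ k) (hm : 2 ≤ m) (hm5 : m ≤ 5)
    (hk : 9 ≤ k) : dM C p x k < dM C p x m := by
  have hpC : p ∈ C := interior_subset hp
  have hxC : x ∈ C := hC.isClosed.frontier_subset hx
  have hxp : x ≠ p := fun h => hx.2 (h ▸ hp)
  have hR : 0 < dist p z := (dist_pos.2 hxp.symm).trans_le (hmax hxC)
  have hsin : 0 ≤ Real.sin (π / m) := Real.sin_nonneg_of_nonneg_of_le_pi (by positivity)
    (div_le_self Real.pi_pos.le (by exact_mod_cast (by omega : 1 ≤ m)))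
  have hinr := h.dist_mul_cos_le_dist_of_mem_frontier hconv (by omega) hpC hz hx
  calc dM C p x k = dist p z := h.dM_eq_of_isMaxOn hC.isBounded (by omega) hxp hpC hz hmax
    _ < 2 * Real.sin (π / m) * Real.cos (π / k) * dist p z :=
        lt_mul_left hR (one_lt_two_mul_sin_pi_div_mul_cos_pi_div hm hm5 hk)
    _ ≤ 2 * Real.sin (π / m) * dist p x := by
        rw [mul_assoc _ (Real.cos _), mul_comm (Real.cos _)]
        gcongr
    _ ≤ dM C p x m := (h.of_dvd hmk (by omega)).two_mul_sin_mul_dist_le_dM hC.isBounded hxC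

theorem stmt_11_general (C : Set ℂ) (p x : ℂ) (kC : ℕ) (hC : IsConvexBody C)
    (hcomp : ¬ kC.Prime) (hmin : 3 ≤ kC.minFac)
    (hsym : IsRotSym C p kC) (hp : p ∈ interior C)
    (hx : x ∈ frontier C) :
    (∀ a b : ℕ, a ∣ kC → b ∣ kC → 1 < a → 1 < b → dM C p x a = dM C p x b)
      ↔ 7 ≤ kC.minFac := by
  obtain ⟨hcpt, hconv, -⟩ := hC
  have hpC : p ∈ C := interior_subset hp
  have hk₀ : kC ≠ 0 := by rintro rfl; simp at hmin
  obtain ⟨z, hz, hmax⟩ :=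
    hcpt.exists_isMaxOn (f := dist p) ⟨p, hpC⟩ (continuous_const.dist continuous_id).continuousOn
  constructor
  · intro hall
    by_contra! h7
    have hχ : kC.minFac.Prime := Nat.minFac_prime (by rintro rfl; simp at hmin)
    have hχ5 : kC.minFac ≤ 5 := by
      by_contra! h6
      exact (show ¬ (6 : ℕ).Prime by decide) (by rwa [show kC.minFac = 6 by omega] at hχ)
    have hk9 : 9 ≤ kC := le_trans (by nlinarith) (Nat.minFac_sq_le_self (by omega) hcomp)
    exact (hsym.dM_lt_dM_of_dvd hcpt hconv hp hx hz hmax kC.minFac_dvd hχ.two_le hχ5 hk9).ne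
      (hall _ _ dvd_rfl kC.minFac_dvd (by omega) hχ.one_lt)
  · intro h7 a b ha hb ha₁ hb₁
    have hxp : x ≠ p := fun h => hx.2 (h ▸ hp)
    have hdM {c : ℕ} (hc : c ∣ kC) (hc₁ : 1 < c) : dM C p x c = dist p z :=
      (hsym.of_dvd hc hk₀).dM_eq_of_isMaxOn hcpt.isBounded
        (by linarith [Nat.minFac_le_of_dvd hc₁ hc]) hxp hpC hz hmax
    rw [hdM ha ha₁, hdM hb hb₁]

/-- For a multi-rotationally symmetric planar convex body with composite
maximal degree `k_C` and minimal degree `χ = minFac k_C ≥ 3`, the values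
`d_M(P_a)` over all divisors `a > 1` of `k_C` all coincide iff `χ ≥ 7`. -/
theorem stmt_11 (C : Set ℂ) (p x : ℂ) (kC : ℕ) (hC : IsConvexBody C)
    (hk2 : 2 ≤ kC) (hcomp : ¬ kC.Prime) (hmin : 3 ≤ kC.minFac)
    (hsym : IsRotSym C p kC) (hp : p ∈ interior C)
    (hx : x ∈ frontier C) (hxr : dist p x = infDist p (frontier C)) :
    (∀ a b : ℕ, a ∣ kC → b ∣ kC → 1 < a → 1 < b → dM C p x a = dM C p x b)
      ↔ 7 ≤ kC.minFac :=
  stmt_11_general C p x kC hC hcomp hmin hsym hp hx
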